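/- arXiv:1810.06928 — 6 statements merged into one kernel-verified Lean document; each statement's English description precedes it below -/
import Mathlib

section
/- Let d ≥ 2 be a natural number and let ℝ^d denote EuclideanSpace ℝ (Fin d) with Lebesgue measure. There exists a constant C(d) > 0 with the following property: for every M ≥ 0 and every measurable function h : ℝ^d → ℝ with |h(z)| ≤ M for almost every z and h(z) = 0 for ‖z‖ > 1, defining E(x) := ∫_{ℝ^d} ((x − z)/‖x − z‖^d)·h(z) dz (the integrand being Lebesgue integrable in z for each x), one has for all x, y ∈ ℝ^d with 0 < ‖x − y‖ ≤ 1/12: ‖E(x) − E(y)‖ ≤ C(d)·M·‖x − y‖·(1 + |log ‖x − y‖|). -/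
/-!
Write `E x - E y = ∫ h z • (K (x - z) - K (y - z)) dz` and put `r = ‖x - y‖`. On `‖x - z‖ < 3r`
both kernels are bounded separately by `‖·‖^(1-d)`, whose integral over a ball of radius `O(r)`
is `O(r)` in polar coordinates. For `‖x - z‖ ≥ 3r` the kernel difference is `O(r ‖x - z‖^(-d))`;
over `3r ≤ ‖x - z‖ < 1` this integrates in polar coordinates to `O(r log (1 / r))`, and on
`‖x - z‖ ≥ 1` it is `O(r)` on the unit ball, outside which `h` vanishes.
-/

open MeasureTheory Metric Set Module

noncomputable section

def coulombKernel {E : Type*} [NormedAddCommGroup E] [NormedSpace ℝ E] (d : ℕ) (w : E) : E :=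
  (‖w‖ ^ d)⁻¹ • w

def coulombNearProfile (d : ℕ) (R : ℝ) : ℝ → ℝ :=
  (Ico 0 R).indicator fun t ↦ (t ^ d)⁻¹ * t

def coulombFarProfile (d : ℕ) (ρ : ℝ) : ℝ → ℝ :=
  (Ico ρ 1).indicator fun t ↦ (t ^ d)⁻¹

end

lemma coulombNearProfile_nonneg (d : ℕ) (R t : ℝ) : 0 ≤ coulombNearProfile d R t :=
  indicator_nonneg (fun _ ht ↦ mul_nonneg (inv_nonneg.2 (pow_nonneg ht.1 d)) ht.1) t

lemma coulombFarProfile_nonneg (d : ℕ) {ρ : ℝ} (hρ : 0 ≤ ρ) (t : ℝ) : 0 ≤ coulombFarProfile d ρ t :=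
  indicator_nonneg (fun _ ht ↦ inv_nonneg.2 (pow_nonneg (hρ.trans ht.1) d)) t

lemma abs_inv_pow_sub_inv_pow_mul_le {s t δ : ℝ} (hs : 0 < s) (ht : 0 < t) (hst : |s - t| ≤ δ)
    (hs2t : s ≤ 2 * t) (d : ℕ) :
    |(s ^ d)⁻¹ - (t ^ d)⁻¹| * t ≤ d * 2 ^ d * δ / s ^ d := by
  set m := max s t
  have hm : m ≤ 2 * t := max_le hs2t (by linarith)
  have hpow : |t ^ d - s ^ d| * t ≤ δ * d * (2 * t) ^ d := by
    have key : (d : ℝ) * m ^ (d - 1) * m = d * m ^ d := by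
      cases d <;> simp [pow_succ, mul_assoc]
    calc |t ^ d - s ^ d| * t ≤ (|t - s| * d * max |t| |s| ^ (d - 1)) * m := by
          gcongr
          · exact abs_pow_sub_pow_le t s d
          · exact le_max_right s t
      _ = |s - t| * (d * m ^ d) := by
          rw [abs_of_pos hs, abs_of_pos ht, max_comm, abs_sub_comm, ← key]; ring
      _ ≤ δ * (d * (2 * t) ^ d) := by
          have : 0 ≤ m := le_max_of_le_left hs.le
          have : 0 ≤ δ := (abs_nonneg _).trans hst
          gcongr
      _ = δ * d * (2 * t) ^ d := by ring
  rw [inv_sub_inv (by positivity) (by positivity), abs_div,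
    abs_of_pos (by positivity : (0 : ℝ) < s ^ d * t ^ d), div_mul_eq_mul_div, div_le_div_iff₀ (by positivity) (by positivity)]
  calc |t ^ d - s ^ d| * t * s ^ d ≤ δ * d * (2 * t) ^ d * s ^ d := by gcongr
    _ = d * 2 ^ d * δ * (s ^ d * t ^ d) := by ring

section Kernel

variable {E : Type*} [NormedAddCommGroup E] [NormedSpace ℝ E] (d : ℕ)

lemma norm_coulombKernel (w : E) : ‖coulombKernel d w‖ = (‖w‖ ^ d)⁻¹ * ‖w‖ := by
  rw [coulombKernel, norm_smul, Real.norm_of_nonneg (by positivity)]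

lemma norm_coulombKernel_sub_le {a b : E} (hab : 3 * ‖a - b‖ ≤ ‖a‖) :
    ‖coulombKernel d a - coulombKernel d b‖ ≤ (1 + d * 2 ^ d) * ‖a - b‖ / ‖a‖ ^ d := by
  rcases eq_or_ne a b with rfl | hne
  · simp
  have hδ : 0 < ‖a - b‖ := norm_pos_iff.2 (sub_ne_zero.2 hne)
  have hst : |‖a‖ - ‖b‖| ≤ ‖a - b‖ := abs_norm_sub_norm_le a b
  have ha : 0 < ‖a‖ := by linarith
  have hb : 0 < ‖b‖ := by linarith [(abs_le.1 hst).2]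
  have hsplit : coulombKernel d a - coulombKernel d b
      = (‖a‖ ^ d)⁻¹ • (a - b) + ((‖a‖ ^ d)⁻¹ - (‖b‖ ^ d)⁻¹) • b := by
    simp only [coulombKernel]; module
  calc ‖coulombKernel d a - coulombKernel d b‖
      ≤ (‖a‖ ^ d)⁻¹ * ‖a - b‖ + |(‖a‖ ^ d)⁻¹ - (‖b‖ ^ d)⁻¹| * ‖b‖ := by
        rw [hsplit]
        refine (norm_add_le _ _).trans_eq ?_
        rw [norm_smul, norm_smul, Real.norm_of_nonneg (by positivity), Real.norm_eq_abs]
    _ ≤ ‖a - b‖ / ‖a‖ ^ d + d * 2 ^ d * ‖a - b‖ / ‖a‖ ^ d := by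
        gcongr
        · exact (inv_mul_eq_div _ _).le
        · exact abs_inv_pow_sub_inv_pow_mul_le ha hb hst (by linarith [(abs_le.1 hst).2]) d
    _ = (1 + d * 2 ^ d) * ‖a - b‖ / ‖a‖ ^ d := by ring

/-- The summand `1` covers `‖w‖ ≥ 1`, where the far profile vanishes. -/
lemma norm_coulombKernel_sub_le_profiles (w v : E) :
    ‖coulombKernel d w - coulombKernel d v‖ ≤
      coulombNearProfile d (3 * ‖w - v‖) ‖w‖ + coulombNearProfile d (4 * ‖w - v‖) ‖v‖ +
        (1 + d * 2 ^ d) * ‖w - v‖ * (coulombFarProfile d (3 * ‖w - v‖) ‖w‖ + 1) := by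
  set r := ‖w - v‖
  have hfar := coulombFarProfile_nonneg d (by positivity : 0 ≤ 3 * r) ‖w‖
  by_cases hw : ‖w‖ < 3 * r
  · have hv : ‖v‖ < 4 * r := by
      linarith [norm_le_norm_add_norm_sub' v w, norm_sub_rev v w]
    calc ‖coulombKernel d w - coulombKernel d v‖
        ≤ ‖coulombKernel d w‖ + ‖coulombKernel d v‖ := norm_sub_le _ _
      _ = coulombNearProfile d (3 * r) ‖w‖ + coulombNearProfile d (4 * r) ‖v‖ := by
        rw [norm_coulombKernel, norm_coulombKernel, coulombNearProfile, coulombNearProfile,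
          indicator_of_mem (show ‖w‖ ∈ Ico 0 (3 * r) from ⟨norm_nonneg w, hw⟩),
          indicator_of_mem (show ‖v‖ ∈ Ico 0 (4 * r) from ⟨norm_nonneg v, hv⟩)]
      _ ≤ _ := le_add_of_nonneg_right (by positivity)
  · replace hw : 3 * r ≤ ‖w‖ := not_lt.1 hw
    have hker := norm_coulombKernel_sub_le d hw
    have hnear := add_nonneg (coulombNearProfile_nonneg d (3 * r) ‖w‖)
      (coulombNearProfile_nonneg d (4 * r) ‖v‖)
    refine hker.trans (le_add_of_nonneg_of_le hnear ?_)
    rw [div_eq_mul_one_div]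
    gcongr
    by_cases hw1 : ‖w‖ < 1
    · rw [coulombFarProfile, indicator_of_mem (show ‖w‖ ∈ Ico (3 * r) 1 from ⟨hw, hw1⟩),
        one_div]
      linarith
    · replace hw1 : 1 ≤ ‖w‖ := not_lt.1 hw1
      calc 1 / ‖w‖ ^ d ≤ 1 := div_le_one_of_le₀ (one_le_pow₀ hw1) (by positivity)
        _ ≤ _ := le_add_of_nonneg_left hfar

end Kernel

lemma pow_smul_indicator_eq (n : ℕ) (s : Set ℝ) (f : ℝ → ℝ) :
    (fun t ↦ t ^ n • s.indicator f t) = s.indicator fun t ↦ t ^ n * f t := by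
  ext t
  exact (indicator_mul_right s (fun t ↦ t ^ n) f).symm

lemma eqOn_pow_pred_mul_inv_pow {n : ℕ} (hn : n ≠ 0) :
    EqOn (fun t : ℝ ↦ t ^ (n - 1) * (t ^ n)⁻¹) (·⁻¹) (Ioi 0) := fun t ht ↦ by
  have : t ≠ 0 := ht.ne'
  dsimp only
  rw [← pow_sub_one_mul hn t]
  field_simp

lemma eqOn_pow_pred_mul_inv_pow_mul_self {n : ℕ} (hn : n ≠ 0) :
    EqOn (fun t : ℝ ↦ t ^ (n - 1) * ((t ^ n)⁻¹ * t)) 1 (Ioi 0) := fun t ht ↦ by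
  have : t ^ (n - 1) * (t ^ n)⁻¹ = t⁻¹ := eqOn_pow_pred_mul_inv_pow hn ht
  dsimp only
  rw [← mul_assoc, this, inv_mul_cancel₀ ht.ne', Pi.one_apply]

section Polar

variable {E : Type*} [NormedAddCommGroup E] [NormedSpace ℝ E] [FiniteDimensional ℝ E]
  [MeasurableSpace E] [BorelSpace E] [Nontrivial E] (μ : Measure E) [μ.IsAddHaarMeasure]

lemma integrable_indicator_Ico_norm_sub {f : ℝ → ℝ} {a b : ℝ}
    (hf : IntegrableOn (fun t ↦ t ^ (finrank ℝ E - 1) * f t) (Ioo a b)) (x : E) :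
    Integrable (fun z ↦ (Ico a b).indicator f ‖x - z‖) μ := by
  refine Integrable.comp_sub_left (f := fun z ↦ (Ico a b).indicator f ‖z‖) ?_ x
  rw [integrable_fun_norm_addHaar μ, pow_smul_indicator_eq]
  exact ((hf.congr_set_ae Ioo_ae_eq_Ico.symm).integrable_indicator
    measurableSet_Ico).integrableOn

lemma integral_indicator_Ico_norm_sub (f : ℝ → ℝ) {a b : ℝ} (ha : 0 ≤ a) (x : E) :
    ∫ z, (Ico a b).indicator f ‖x - z‖ ∂μ =
      finrank ℝ E * μ.real (ball 0 1) * ∫ t in Ioo a b, t ^ (finrank ℝ E - 1) * f t := by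
  rw [integral_sub_left_eq_self (fun z ↦ (Ico a b).indicator f ‖z‖) μ x,
    integral_fun_norm_addHaar μ, pow_smul_indicator_eq, setIntegral_indicator measurableSet_Ico,
    nsmul_eq_mul, smul_eq_mul, mul_assoc]
  congr 2
  have hset : Ioi 0 ∩ Ico a b = Ico a b \ {0} := by
    ext t
    simp only [mem_inter_iff, mem_Ioi, mem_Ico, mem_sdiff, mem_singleton_iff]
    constructor
    · rintro ⟨ht, hat, htb⟩; exact ⟨⟨hat, htb⟩, ht.ne'⟩
    · rintro ⟨⟨hat, htb⟩, ht⟩; exact ⟨lt_of_le_of_ne (ha.trans hat) (Ne.symm ht), hat, htb⟩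
  rw [hset]
  exact setIntegral_congr_set
    ((sdiff_null_ae_eq_self (measure_singleton 0)).trans Ioo_ae_eq_Ico.symm)

lemma integrable_coulombNearProfile (R : ℝ) (x : E) :
    Integrable (fun z ↦ coulombNearProfile (finrank ℝ E) R ‖x - z‖) μ :=
  integrable_indicator_Ico_norm_sub μ ((integrableOn_congr_fun
    ((eqOn_pow_pred_mul_inv_pow_mul_self finrank_pos.ne').mono Ioo_subset_Ioi_self)
    measurableSet_Ioo).2 (integrableOn_const (by simp) (by simp))) x

lemma integral_coulombNearProfile {R : ℝ} (hR : 0 ≤ R) (x : E) :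
    ∫ z, coulombNearProfile (finrank ℝ E) R ‖x - z‖ ∂μ = finrank ℝ E * μ.real (ball 0 1) * R := by
  rw [coulombNearProfile, integral_indicator_Ico_norm_sub μ _ le_rfl,
    setIntegral_congr_fun measurableSet_Ioo
      ((eqOn_pow_pred_mul_inv_pow_mul_self finrank_pos.ne').mono Ioo_subset_Ioi_self)]
  simp [hR]

lemma integrable_coulombFarProfile {ρ : ℝ} (hρ : 0 < ρ) (x : E) :
    Integrable (fun z ↦ coulombFarProfile (finrank ℝ E) ρ ‖x - z‖) μ := by
  refine integrable_indicator_Ico_norm_sub μ ((integrableOn_congr_fun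
    ((eqOn_pow_pred_mul_inv_pow finrank_pos.ne').mono fun t ht ↦ hρ.trans ht.1)
    measurableSet_Ioo).2 ?_) x
  exact ((continuousOn_inv₀.mono fun t ht ↦ (hρ.trans_le ht.1).ne').integrableOn_Icc).mono_set
    Ioo_subset_Icc_self

lemma integral_coulombFarProfile {ρ : ℝ} (hρ : 0 < ρ) (hρ1 : ρ ≤ 1) (x : E) :
    ∫ z, coulombFarProfile (finrank ℝ E) ρ ‖x - z‖ ∂μ =
      finrank ℝ E * μ.real (ball 0 1) * Real.log ρ⁻¹ := by
  rw [coulombFarProfile, integral_indicator_Ico_norm_sub μ _ hρ.le,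
    setIntegral_congr_fun measurableSet_Ioo
      ((eqOn_pow_pred_mul_inv_pow finrank_pos.ne').mono fun t ht ↦ hρ.trans ht.1),
    ← integral_Ioc_eq_integral_Ioo, ← intervalIntegral.integral_of_le hρ1,
    integral_inv_of_pos hρ one_pos, one_div]

end Polar

lemma norm_smul_coulombKernel_sub_le {E : Type*} [NormedAddCommGroup E] [NormedSpace ℝ E]
    (d : ℕ) {h : E → ℝ} {M : ℝ} (hsupp : ∀ z, 1 < ‖z‖ → h z = 0) (x y : E) {z : E}
    (hz : |h z| ≤ M) :
    ‖h z • (coulombKernel d (x - z) - coulombKernel d (y - z))‖ ≤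
      M * (coulombNearProfile d (3 * ‖x - y‖) ‖x - z‖ +
          coulombNearProfile d (4 * ‖x - y‖) ‖y - z‖ +
          (1 + d * 2 ^ d) * ‖x - y‖ * coulombFarProfile d (3 * ‖x - y‖) ‖x - z‖) +
        M * (1 + d * 2 ^ d) * ‖x - y‖ * (closedBall (0 : E) 1).indicator 1 z := by
  have hK := norm_coulombKernel_sub_le_profiles d (x - z) (y - z)
  rw [sub_sub_sub_cancel_right] at hK
  rw [norm_smul, Real.norm_eq_abs]
  by_cases hz1 : ‖z‖ ≤ 1
  · rw [indicator_of_mem (mem_closedBall_zero_iff.2 hz1), Pi.one_apply]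
    calc |h z| * ‖coulombKernel d (x - z) - coulombKernel d (y - z)‖
        ≤ M * _ := mul_le_mul hz hK (norm_nonneg _) ((abs_nonneg _).trans hz)
      _ = _ := by ring
  · have hM : 0 ≤ M := (abs_nonneg _).trans hz
    have := coulombNearProfile_nonneg d (3 * ‖x - y‖) ‖x - z‖
    have := coulombNearProfile_nonneg d (4 * ‖x - y‖) ‖y - z‖
    have := coulombFarProfile_nonneg d (by positivity : 0 ≤ 3 * ‖x - y‖) ‖x - z‖
    have := indicator_nonneg (s := closedBall (0 : E) 1) (f := 1) (fun _ _ ↦ zero_le_one' ℝ) z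
    rw [hsupp z (not_le.1 hz1), abs_zero, zero_mul]
    positivity

section Field

variable {E : Type*} [NormedAddCommGroup E] [NormedSpace ℝ E] [FiniteDimensional ℝ E]
  [MeasurableSpace E] [BorelSpace E] (μ : Measure E) [μ.IsAddHaarMeasure]

theorem norm_integral_coulombKernel_sub_le {d : ℕ} (hd : finrank ℝ E = d) {M : ℝ} {h : E → ℝ}
    (hM : ∀ᵐ z ∂μ, |h z| ≤ M) (hsupp : ∀ z, 1 < ‖z‖ → h z = 0)
    (hint : ∀ x, Integrable (fun z ↦ h z • coulombKernel d (x - z)) μ)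
    {x y : E} (hxy : 0 < ‖x - y‖) (hxy1 : 3 * ‖x - y‖ ≤ 1) :
    ‖∫ z, h z • coulombKernel d (x - z) ∂μ - ∫ z, h z • coulombKernel d (y - z) ∂μ‖ ≤
      M * ‖x - y‖ * (7 * d * μ.real (ball 0 1) +
        (1 + d * 2 ^ d) *
          (d * μ.real (ball 0 1) * Real.log (3 * ‖x - y‖)⁻¹ + μ.real (ball 0 1))) := by
  subst hd
  have : Nontrivial E := nontrivial_of_ne x y (sub_ne_zero.1 (norm_pos_iff.1 hxy))
  set n := finrank ℝ E
  set r := ‖x - y‖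
  set C : ℝ := 1 + n * 2 ^ n
  set κ := μ.real (ball (0 : E) 1)
  have hnear₃ := integrable_coulombNearProfile μ (3 * r) x
  have hnear₄ := integrable_coulombNearProfile μ (4 * r) y
  have hfar := integrable_coulombFarProfile μ (by positivity : 0 < 3 * r) x
  have hball : Integrable ((closedBall (0 : E) 1).indicator 1) μ :=
    (integrable_indicator_iff measurableSet_closedBall).2
      (integrableOn_const (C := (1 : ℝ)) measure_closedBall_lt_top.ne)
  rw [← integral_sub (hint x) (hint y)]
  simp_rw [← smul_sub]
  calc _ ≤ ∫ z, (M * (coulombNearProfile n (3 * r) ‖x - z‖ +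
          coulombNearProfile n (4 * r) ‖y - z‖ + C * r * coulombFarProfile n (3 * r) ‖x - z‖) +
        M * C * r * (closedBall (0 : E) 1).indicator 1 z) ∂μ :=
        norm_integral_le_of_norm_le (by fun_prop)
          (hM.mono fun z hz ↦ norm_smul_coulombKernel_sub_le n hsupp x y hz)
    _ = M * (n * κ * (3 * r) + n * κ * (4 * r) + C * r * (n * κ * Real.log (3 * r)⁻¹)) +
        M * C * r * κ := by
        rw [integral_add (by fun_prop) (by fun_prop), integral_const_mul, integral_const_mul,
          integral_add (by fun_prop) (by fun_prop), integral_add hnear₃ hnear₄, integral_const_mul,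
          integral_coulombNearProfile μ (by positivity),
          integral_coulombNearProfile μ (by positivity),
          integral_coulombFarProfile μ (by positivity) hxy1,
          integral_indicator_one measurableSet_closedBall,
          Measure.addHaar_real_closedBall_eq_addHaar_real_ball]
    _ = _ := by ring

end Field

theorem coulomb_field_logLipschitz_general (d : ℕ) :
    ∃ C : ℝ, 0 < C ∧
      ∀ (M : ℝ), 0 ≤ M →
      ∀ h : EuclideanSpace ℝ (Fin d) → ℝ, Measurable h →
      (∀ᵐ z : EuclideanSpace ℝ (Fin d), |h z| ≤ M) →
      (∀ z : EuclideanSpace ℝ (Fin d), 1 < ‖z‖ → h z = 0) →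
      (∀ x : EuclideanSpace ℝ (Fin d),
        Integrable (fun z => h z • ((‖x - z‖ ^ d)⁻¹ • (x - z)))) →
      ∀ x y : EuclideanSpace ℝ (Fin d), 0 < ‖x - y‖ → ‖x - y‖ ≤ 1 / 12 →
        ‖(∫ z, h z • ((‖x - z‖ ^ d)⁻¹ • (x - z))) -
            (∫ z, h z • ((‖y - z‖ ^ d)⁻¹ • (y - z)))‖ ≤
          C * M * ‖x - y‖ * (1 + |Real.log ‖x - y‖|) := by
  set κ := volume.real (ball (0 : EuclideanSpace ℝ (Fin d)) 1)
  set K : ℝ := 1 + d * 2 ^ d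
  have hκ : 0 < κ := ENNReal.toReal_pos (measure_ball_pos volume 0 one_pos).ne'
    measure_ball_lt_top.ne
  refine ⟨7 * d * κ + K * (d * κ + κ), by positivity, ?_⟩
  intro M hM h _ hbound hsupp hint x y hxy hxy12
  set r := ‖x - y‖
  have hlog : Real.log (3 * r)⁻¹ ≤ 1 + |Real.log r| := by
    rw [Real.log_inv, Real.log_mul three_ne_zero hxy.ne']
    linarith [Real.log_pos (by norm_num : (1 : ℝ) < 3), neg_abs_le (Real.log r)]
  calc _ ≤ M * r * (7 * d * κ + K * (d * κ * Real.log (3 * r)⁻¹ + κ)) :=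
        norm_integral_coulombKernel_sub_le volume finrank_euclideanSpace_fin hbound hsupp hint
          hxy (by linarith)
    _ ≤ M * r * (7 * d * κ + K * (d * κ * (1 + |Real.log r|) + κ)) := by gcongr
    _ ≤ _ := by
        have : 0 ≤ M * r * |Real.log r| * (7 * d * κ + K * κ) := by positivity
        linarith

/-- Log-Lipschitz estimate for the singular (Coulomb) part of the electric field
`E = K ∗ h` with `K x = x / ‖x‖ ^ d`, for bounded `h` supported in the unit ball. -/
theorem coulomb_field_logLipschitz (d : ℕ) (hd : 2 ≤ d) :
    ∃ C : ℝ, 0 < C ∧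
      ∀ (M : ℝ), 0 ≤ M →
      ∀ h : EuclideanSpace ℝ (Fin d) → ℝ, Measurable h →
      (∀ᵐ z : EuclideanSpace ℝ (Fin d), |h z| ≤ M) →
      (∀ z : EuclideanSpace ℝ (Fin d), 1 < ‖z‖ → h z = 0) →
      (∀ x : EuclideanSpace ℝ (Fin d),
        Integrable (fun z => h z • ((‖x - z‖ ^ d)⁻¹ • (x - z)))) →
      ∀ x y : EuclideanSpace ℝ (Fin d), 0 < ‖x - y‖ → ‖x - y‖ ≤ 1 / 12 →
        ‖(∫ z, h z • ((‖x - z‖ ^ d)⁻¹ • (x - z))) -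
            (∫ z, h z • ((‖y - z‖ ^ d)⁻¹ • (y - z)))‖ ≤
          C * M * ‖x - y‖ * (1 + |Real.log ‖x - y‖|) :=
  coulomb_field_logLipschitz_general d
end

section
/- Let d > 0 be a real number. The function a : ℝ → ℝ defined by a(x) = x·(log(4x/(e²·d)))² is concave on the interval [0, d·e/4] (with the convention a(0) = 0), and its derivative vanishes at x = d/4, i.e. a'(d/4) = 0. -/
/-!
The second derivative of `g y = y (log y)²` is `2 (log y + 1) / y`, which is nonpositive exactly
for `0 < y ≤ e⁻¹`, and `g` extends continuously by `0` at `y = 0`; so `g` is concave on `[0, e⁻¹]`.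
Since `x (log (4x / (e² d)))² = c⁻¹ g (c x)` with `c = 4 / (e² d)`, it is concave on
`[0, e⁻¹ / c] = [0, d e / 4]`. Its derivative `g' (c x) = log (c x) (log (c x) + 2)` vanishes
where `c x = e⁻²`, i.e. at `x = d / 4`.
-/

open Set

namespace Real

theorem hasDerivAt_mul_log_mul_sq {c x : ℝ} (hc : c ≠ 0) (hx : x ≠ 0) :
    HasDerivAt (fun y => y * log (c * y) ^ 2) (log (c * x) ^ 2 + 2 * log (c * x)) x := by
  have hlog : HasDerivAt (fun y => log (c * y)) x⁻¹ x :=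
    ((hasDerivAt_log (mul_ne_zero hc hx)).comp x ((hasDerivAt_id' x).const_mul c)).congr_deriv
      (by field_simp)
  exact ((hasDerivAt_id' x).mul (hlog.fun_pow 2)).congr_deriv (by field_simp; ring)

theorem hasDerivAt_mul_log_sq {x : ℝ} (hx : x ≠ 0) :
    HasDerivAt (fun y => y * log y ^ 2) (log x ^ 2 + 2 * log x) x := by
  simpa using hasDerivAt_mul_log_mul_sq one_ne_zero hx

theorem hasDerivAt_log_sq_add_two_mul_log {x : ℝ} (hx : x ≠ 0) :
    HasDerivAt (fun y => log y ^ 2 + 2 * log y) (2 * (log x + 1) / x) x :=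
  (((hasDerivAt_log hx).fun_pow 2).add ((hasDerivAt_log hx).const_mul 2)).congr_deriv
    (by field_simp; ring)

/-- On `[0, ∞)` we have `y (log y)² = 4 (√y log √y)²`, reducing continuity at `0` to that of
`y log y`. -/
theorem continuousOn_mul_log_sq : ContinuousOn (fun y => y * log y ^ 2) (Ici 0) := by
  have hsqrt : Continuous fun y => 4 * (√y * log √y) ^ 2 :=
    continuous_const.mul ((continuous_mul_log.comp continuous_sqrt).pow 2)
  refine hsqrt.continuousOn.congr fun y (hy : 0 ≤ y) => ?_
  simp only [mul_pow, sq_sqrt hy, log_sqrt hy]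
  ring

theorem concaveOn_mul_log_sq : ConcaveOn ℝ (Icc 0 (exp (-1))) (fun y => y * log y ^ 2) := by
  refine concaveOn_of_hasDerivWithinAt2_nonpos (convex_Icc _ _)
    (continuousOn_mul_log_sq.mono Icc_subset_Ici_self) (f' := fun x => log x ^ 2 + 2 * log x)
    (f'' := fun x => 2 * (log x + 1) / x)
    (fun x hx => ?_) (fun x hx => ?_) (fun x hx => ?_) <;> rw [interior_Icc] at hx
  · exact (hasDerivAt_mul_log_sq hx.1.ne').hasDerivWithinAt
  · exact (hasDerivAt_log_sq_add_two_mul_log hx.1.ne').hasDerivWithinAt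
  · have hlog : log x < -1 := (log_lt_iff_lt_exp hx.1).2 hx.2
    exact div_nonpos_of_nonpos_of_nonneg (by linarith) hx.1.le

theorem concaveOn_mul_log_mul_sq {c : ℝ} (hc : 0 < c) :
    ConcaveOn ℝ (Icc 0 (exp (-1) / c)) (fun x => x * log (c * x) ^ 2) := by
  have h := (concaveOn_mul_log_sq.comp_linearMap (LinearMap.mul ℝ ℝ c)).smul (inv_nonneg.2 hc.le)
  have hmul : ⇑(LinearMap.mul ℝ ℝ c) = (c * ·) := rfl
  rw [hmul, preimage_const_mul_Icc₀ _ _ hc, zero_div] at h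
  refine h.congr fun x _ => ?_
  simp only [Function.comp_apply, smul_eq_mul]
  field_simp

end Real

open Real

/-- The function `a x = x · (log (4x / (e² d)))²` is concave on `[0, d e / 4]`
(with `a 0 = 0`, which holds with Lean's convention `log 0 = 0`), and its derivative
vanishes at `x = d / 4`. -/
theorem concaveOn_mul_sq_log (d : ℝ) (hd : 0 < d) :
    ConcaveOn ℝ (Set.Icc 0 (d * Real.exp 1 / 4))
        (fun x : ℝ => x * Real.log (4 * x / (Real.exp 1 ^ 2 * d)) ^ 2) ∧
      HasDerivAt (fun x : ℝ => x * Real.log (4 * x / (Real.exp 1 ^ 2 * d)) ^ 2) 0 (d / 4) := by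
  set c := 4 / (exp 1 ^ 2 * d)
  have hc : 0 < c := by positivity
  have hf : (fun x : ℝ => x * log (4 * x / (exp 1 ^ 2 * d)) ^ 2) =
      fun x => x * log (c * x) ^ 2 := by
    simp only [c, mul_div_right_comm]
  have hend : d * exp 1 / 4 = exp (-1) / c := by
    rw [exp_neg]; simp only [c]; field_simp
  have hcx : c * (d / 4) = exp (-2) := by
    rw [exp_neg, show (2 : ℝ) = 1 + 1 by norm_num, exp_add]; simp only [c]; field_simp
  rw [hf, hend]
  refine ⟨concaveOn_mul_log_mul_sq hc, ?_⟩
  convert hasDerivAt_mul_log_mul_sq hc.ne' (by positivity : d / 4 ≠ 0) using 1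
  rw [hcx, log_exp]
  norm_num
end

section
/- Let c > 0, d > 0 and T > 0 be real numbers. Let D : ℝ → ℝ be differentiable on [0, T] with 0 < D(t) ≤ d/4 for all t ∈ [0, T], and suppose its derivative satisfies D'(t) ≤ c·D(t)·(1 + log(d/(4·D(t)))) for all t ∈ [0, T]. Then for all t ∈ [0, T], D(t) ≤ (d·e/4)·exp( log(4·D(0)/(d·e)) · exp(−c·t) ). -/
/-! With `u = log (4 D / (d e))` the hypothesis on `D'` reads `u' ≤ -c u`, because
`1 + log (d / (4 D)) = -u`. Grönwall's inequality for this linear differential inequality gives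
`u t ≤ u 0 · exp (-c t)`, and exponentiating back yields the bound on `D`. -/

open Real Set

theorem le_mul_exp_of_deriv_right_le_mul {f f' : ℝ → ℝ} {K a b : ℝ}
    (hf : ContinuousOn f (Icc a b)) (hf' : ∀ x ∈ Ico a b, HasDerivWithinAt f (f' x) (Ici x) x)
    (bound : ∀ x ∈ Ico a b, f' x ≤ K * f x) :
    ∀ x ∈ Icc a b, f x ≤ f a * exp (K * (x - a)) := by
  intro x hx
  rw [← gronwallBound_ε0]
  exact le_gronwallBound_of_liminf_deriv_right_le hf
    (fun x hx _r hr => (hf' x hx).liminf_right_slope_le hr) le_rfl (by simpa using bound) x hx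

theorem log_four_mul_div_mul_exp_one {x d : ℝ} (hx : x ≠ 0) (hd : d ≠ 0) :
    log (4 * x / (d * exp 1)) = -(1 + log (d / (4 * x))) := by
  rw [log_div (by positivity) (by positivity), log_mul (by norm_num) hx,
    log_mul hd (exp_pos 1).ne', log_exp, log_div hd (by positivity), log_mul (by norm_num) hx]
  ring

theorem log_gronwall_general (c d T : ℝ) (hd : 0 < d)
    (D : ℝ → ℝ)
    (hdiff : ∀ t ∈ Set.Icc (0 : ℝ) T, DifferentiableAt ℝ D t)
    (hbound : ∀ t ∈ Set.Icc (0 : ℝ) T, 0 < D t ∧ D t ≤ d / 4)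
    (hderiv : ∀ t ∈ Set.Icc (0 : ℝ) T,
      deriv D t ≤ c * D t * (1 + Real.log (d / (4 * D t)))) :
    ∀ t ∈ Set.Icc (0 : ℝ) T,
      D t ≤ d * Real.exp 1 / 4 *
        Real.exp (Real.log (4 * D 0 / (d * Real.exp 1)) * Real.exp (-c * t)) := by
  intro t ht
  set u : ℝ → ℝ := fun s => log (4 * D s / (d * exp 1))
  have hu : ∀ s ∈ Icc 0 T, HasDerivAt u (deriv D s / D s) s := by
    intro s hs
    have hDs := (hbound s hs).1
    convert ((((hdiff s hs).hasDerivAt.const_mul 4).div_const (d * exp 1)).log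
      (by positivity)) using 1
    field_simp
  have hu_le : ∀ s ∈ Ico 0 T, deriv D s / D s ≤ -c * u s := by
    intro s hs_Ico
    have hs := Ico_subset_Icc_self hs_Ico
    have hDs := (hbound s hs).1
    simp only [u]
    rw [div_le_iff₀ hDs, log_four_mul_div_mul_exp_one hDs.ne' hd.ne']
    linear_combination hderiv s hs
  have hgronwall := le_mul_exp_of_deriv_right_le_mul
    (fun s hs => (hu s hs).continuousAt.continuousWithinAt)
    (fun s hs => (hu s (Ico_subset_Icc_self hs)).hasDerivWithinAt) hu_le t ht
  calc D t = d * exp 1 / 4 * exp (u t) := by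
        simp only [u]
        rw [exp_log (by have := (hbound t ht).1; positivity)]
        field_simp
    _ ≤ _ := by
        gcongr
        simpa using hgronwall

/-- Osgood/log-Gronwall inequality: if `0 < D ≤ d/4` on `[0,T]` and
`D' ≤ c·D·(1 + log (d / (4 D)))`, then
`D t ≤ (d e / 4) · exp (log (4 D 0 / (d e)) · exp (−c t))` on `[0,T]`. -/
theorem log_gronwall (c d T : ℝ) (hc : 0 < c) (hd : 0 < d) (hT : 0 < T)
    (D : ℝ → ℝ)
    (hdiff : ∀ t ∈ Set.Icc (0 : ℝ) T, DifferentiableAt ℝ D t)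
    (hbound : ∀ t ∈ Set.Icc (0 : ℝ) T, 0 < D t ∧ D t ≤ d / 4)
    (hderiv : ∀ t ∈ Set.Icc (0 : ℝ) T,
      deriv D t ≤ c * D t * (1 + Real.log (d / (4 * D t)))) :
    ∀ t ∈ Set.Icc (0 : ℝ) T,
      D t ≤ d * Real.exp 1 / 4 *
        Real.exp (Real.log (4 * D 0 / (d * Real.exp 1)) * Real.exp (-c * t)) :=
  log_gronwall_general c d T hd D hdiff hbound hderiv
end

section
/- Let d ≥ 1 be a natural number, let ℝ^d denote EuclideanSpace ℝ (Fin d) with Lebesgue measure, and let k, m be real numbers with 0 ≤ k < m. There exists a constant C > 0, depending only on d, m and k, such that for every measurable function g : ℝ^d → ℝ and every G > 0 with 0 ≤ g(v) ≤ G for almost every v, one has ∫_{ℝ^d} ‖v‖^k g(v) dv ≤ C · G^{(m−k)/(m+d)} · ( ∫_{ℝ^d} ‖v‖^m g(v) dv )^{(k+d)/(m+d)}. -/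
open MeasureTheory ENNReal Metric
open scoped NNReal

/-!
Split the integral at a radius `R`. On the ball `‖v‖ < R` use `g ≤ G`, which costs
`G R^k |B_R| = |B_1| G R^(k+d)`; outside it use `‖v‖^k ≤ R^(k-m) ‖v‖^m`, which costs `R^(k-m) M`
where `M = ∫ ‖v‖^m g`. The radius `R = (M / G)^(1/(m+d))` balances the two terms, and each one
then equals `G^((m-k)/(m+d)) M^((k+d)/(m+d))`.
-/

theorem NNReal.mul_div_rpow_eq {G : ℝ≥0} (hG : G ≠ 0) (M : ℝ≥0) (t : ℝ) :
    G * (M / G) ^ t = G ^ (1 - t) * M ^ t := by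
  rw [NNReal.div_rpow, NNReal.rpow_sub hG, NNReal.rpow_one]
  ring

noncomputable def optimalRadius (G M : ℝ≥0) (s : ℝ) : ℝ≥0 := (M / G) ^ (1 / s)

theorem mul_optimalRadius_rpow {G : ℝ≥0} (hG : G ≠ 0) (M : ℝ≥0) {k m n : ℝ}
    (hmn : m + n ≠ 0) :
    G * optimalRadius G M (m + n) ^ (k + n) =
      G ^ ((m - k) / (m + n)) * M ^ ((k + n) / (m + n)) := by
  rw [optimalRadius, ← NNReal.rpow_mul, NNReal.mul_div_rpow_eq hG]
  congr 2
  · field_simp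
    ring
  · ring

theorem optimalRadius_rpow_mul {G M : ℝ≥0} (hG : G ≠ 0) (hM : M ≠ 0) {k m n : ℝ}
    (hmn : m + n ≠ 0) :
    optimalRadius G M (m + n) ^ (k - m) * M =
      G ^ ((m - k) / (m + n)) * M ^ ((k + n) / (m + n)) := by
  have hMG : M / G ≠ 0 := div_ne_zero hM hG
  have hexp : 1 / (m + n) * (k - m) + 1 = (k + n) / (m + n) := by
    field_simp
    ring
  calc optimalRadius G M (m + n) ^ (k - m) * M
      = G * (M / G) ^ (1 / (m + n) * (k - m) + 1) := by
        rw [optimalRadius, ← NNReal.rpow_mul, NNReal.rpow_add_one hMG]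
        field_simp
    _ = _ := by
      rw [NNReal.mul_div_rpow_eq hG, hexp]
      congr 2
      field_simp
      ring

theorem ENNReal.rpow_le_rpow_sub_mul_rpow {R : ℝ≥0} {x : ℝ≥0∞} (hR : R ≠ 0) (hx : x ≠ ⊤)
    (hRx : R ≤ x) {k m : ℝ} (hkm : k ≤ m) : x ^ k ≤ (R : ℝ≥0∞) ^ (k - m) * x ^ m := by
  lift x to ℝ≥0 using hx
  have hx0 : x ≠ 0 := ne_bot_of_le_ne_bot hR (coe_le_coe.1 hRx)
  rw [← coe_rpow_of_ne_zero hR, ← coe_rpow_of_ne_zero hx0, ← coe_rpow_of_ne_zero hx0,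
    ← coe_mul, coe_le_coe, ← sub_add_cancel k m, NNReal.rpow_add hx0, add_sub_cancel_right]
  gcongr ?_ * _
  exact NNReal.rpow_le_rpow_of_nonpos (pos_iff_ne_zero.2 hR) (coe_le_coe.1 hRx) (sub_nonpos.2 hkm)

section SeminormedAddCommGroup

variable {E : Type*} [SeminormedAddCommGroup E] {k m : ℝ}

theorem enorm_rpow_mul_le_indicator_add {R : ℝ≥0} (hR : R ≠ 0) (hk : 0 ≤ k) (hkm : k ≤ m)
    {a G : ℝ≥0∞} (haG : a ≤ G) (v : E) :
    ‖v‖ₑ ^ k * a ≤ (ball 0 R).indicator (fun _ ↦ (R : ℝ≥0∞) ^ k * G) v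
      + (R : ℝ≥0∞) ^ (k - m) * (‖v‖ₑ ^ m * a) := by
  by_cases hv : v ∈ ball (0 : E) R
  · rw [Set.indicator_of_mem hv]
    have hvR : ‖v‖ₑ ≤ R := by
      rw [mem_ball_zero_iff, ← coe_nnnorm, NNReal.coe_lt_coe] at hv
      exact coe_le_coe.2 hv.le
    exact le_add_right (by gcongr)
  · rw [Set.indicator_of_notMem hv, zero_add, ← mul_assoc]
    have hRv : (R : ℝ≥0∞) ≤ ‖v‖ₑ := by
      rw [mem_ball_zero_iff, not_lt, ← coe_nnnorm, NNReal.coe_le_coe] at hv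
      exact coe_le_coe.2 hv
    gcongr
    exact rpow_le_rpow_sub_mul_rpow hR enorm_ne_top hRv hkm

variable [MeasurableSpace E] [OpensMeasurableSpace E] (μ : Measure E)

theorem lintegral_enorm_rpow_mul_le_of_ae_le {g : E → ℝ≥0∞} {G : ℝ≥0∞}
    (hgG : ∀ᵐ v ∂μ, g v ≤ G) {R : ℝ≥0} (hR : R ≠ 0) (hk : 0 ≤ k) (hkm : k ≤ m) :
    ∫⁻ v, ‖v‖ₑ ^ k * g v ∂μ ≤
      (R : ℝ≥0∞) ^ k * G * μ (ball 0 R) + (R : ℝ≥0∞) ^ (k - m) * ∫⁻ v, ‖v‖ₑ ^ m * g v ∂μ := by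
  calc ∫⁻ v, ‖v‖ₑ ^ k * g v ∂μ
      ≤ ∫⁻ v, (ball 0 R).indicator (fun _ ↦ (R : ℝ≥0∞) ^ k * G) v
          + (R : ℝ≥0∞) ^ (k - m) * (‖v‖ₑ ^ m * g v) ∂μ :=
        lintegral_mono_ae <| hgG.mono fun v hv ↦ enorm_rpow_mul_le_indicator_add hR hk hkm hv v
    _ = _ := by
      rw [lintegral_add_left (measurable_const.indicator measurableSet_ball),
        lintegral_indicator_const measurableSet_ball,
        lintegral_const_mul' _ _ (coe_rpow_of_ne_zero hR _ ▸ coe_ne_top)]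

end SeminormedAddCommGroup

theorem lintegral_enorm_rpow_mul_eq_zero {E : Type*} [NormedAddCommGroup E] [MeasurableSpace E]
    [OpensMeasurableSpace E] (μ : Measure E) [NullSingletonClass μ] {g : E → ℝ≥0∞}
    (hg : AEMeasurable g μ) (k : ℝ) {m : ℝ} (h : ∫⁻ v, ‖v‖ₑ ^ m * g v ∂μ = 0) :
    ∫⁻ v, ‖v‖ₑ ^ k * g v ∂μ = 0 := by
  rw [lintegral_eq_zero_iff' (by fun_prop)] at h
  rw [lintegral_eq_zero_iff' (by fun_prop)]
  filter_upwards [h, μ.ae_ne 0] with v hv hv0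
  have hnorm : ‖v‖ₑ ^ m ≠ 0 := by simp [rpow_eq_zero_iff, hv0]
  simp [(mul_eq_zero.1 hv).resolve_left hnorm]

theorem lintegral_enorm_rpow_mul_le {E : Type*} [NormedAddCommGroup E] [NormedSpace ℝ E]
    [Nontrivial E] [FiniteDimensional ℝ E] [MeasurableSpace E] [BorelSpace E] (μ : Measure E)
    [μ.IsAddHaarMeasure] {g : E → ℝ≥0∞} (hg : AEMeasurable g μ) {G : ℝ≥0} (hG : G ≠ 0)
    (hgG : ∀ᵐ v ∂μ, g v ≤ G) {k m : ℝ} (hk : 0 ≤ k) (hkm : k < m) :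
    ∫⁻ v, ‖v‖ₑ ^ k * g v ∂μ ≤
      (μ (ball 0 1) + 1) * (G : ℝ≥0∞) ^ ((m - k) / (m + Module.finrank ℝ E)) *
        (∫⁻ v, ‖v‖ₑ ^ m * g v ∂μ) ^ ((k + Module.finrank ℝ E) / (m + Module.finrank ℝ E)) := by
  set n := Module.finrank ℝ E
  have hn : (0 : ℝ) < n := by exact_mod_cast Module.finrank_pos
  have hmn : m + n ≠ 0 := by linarith
  rcases eq_or_ne (∫⁻ v, ‖v‖ₑ ^ m * g v ∂μ) 0 with hM0 | hM0
  · rw [lintegral_enorm_rpow_mul_eq_zero μ hg k hM0]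
    exact bot_le
  rcases eq_or_ne (∫⁻ v, ‖v‖ₑ ^ m * g v ∂μ) ⊤ with hMtop | hMtop
  · have hC : (μ (ball 0 1) + 1) * (G : ℝ≥0∞) ^ ((m - k) / (m + n)) ≠ 0 :=
      mul_ne_zero (by simp) (by simp [rpow_eq_zero_iff, hG])
    rw [hMtop, top_rpow_of_pos (div_pos (by linarith) (by linarith)), mul_top hC]
    exact le_top
  obtain ⟨M, hM⟩ : ∃ M : ℝ≥0, ∫⁻ v, ‖v‖ₑ ^ m * g v ∂μ = M := ⟨_, (coe_toNNReal hMtop).symm⟩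
  have hMne : M ≠ 0 := by rintro rfl; exact hM0 hM
  set R := optimalRadius G M (m + n)
  have hR : R ≠ 0 := by simp [R, optimalRadius, NNReal.rpow_eq_zero_iff, hG, hMne, hmn]
  calc ∫⁻ v, ‖v‖ₑ ^ k * g v ∂μ
      ≤ (R : ℝ≥0∞) ^ k * G * μ (ball 0 R) + (R : ℝ≥0∞) ^ (k - m) * M := by
        rw [← hM]
        exact lintegral_enorm_rpow_mul_le_of_ae_le μ hgG hR hk hkm.le
    _ = μ (ball 0 1) * ↑(G * R ^ (k + n)) + ↑(R ^ (k - m) * M) := by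
        rw [Measure.addHaar_ball_of_pos μ 0 (NNReal.coe_pos.2 (pos_iff_ne_zero.2 hR)),
          ← NNReal.coe_pow, ofReal_coe_nnreal, coe_mul, coe_mul, coe_rpow_of_ne_zero hR,
          coe_rpow_of_ne_zero hR, rpow_add _ _ (coe_ne_zero.2 hR) coe_ne_top, rpow_natCast,
          coe_pow]
        ring
    _ = _ := by
        rw [mul_optimalRadius_rpow hG M hmn, optimalRadius_rpow_mul hG hMne hmn, hM, coe_mul,
          coe_rpow_of_ne_zero hG, coe_rpow_of_ne_zero hMne]
        ring

/-- Velocity-moment interpolation: for `0 ≤ g ≤ G` a.e.,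
`∫ ‖v‖^k g ≤ C · G^{(m−k)/(m+d)} · (∫ ‖v‖^m g)^{(k+d)/(m+d)}`. -/
theorem moment_interpolation (d : ℕ) (hd : 1 ≤ d) (k m : ℝ) (hk : 0 ≤ k) (hkm : k < m) :
    ∃ C : ℝ, 0 < C ∧
      ∀ g : EuclideanSpace ℝ (Fin d) → ℝ, Measurable g →
      ∀ G : ℝ, 0 < G →
      (∀ᵐ v : EuclideanSpace ℝ (Fin d), 0 ≤ g v ∧ g v ≤ G) →
      (∫⁻ v : EuclideanSpace ℝ (Fin d), (‖v‖₊ : ℝ≥0∞) ^ k * ENNReal.ofReal (g v)) ≤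
        ENNReal.ofReal (C * G ^ ((m - k) / (m + d))) *
          (∫⁻ v : EuclideanSpace ℝ (Fin d), (‖v‖₊ : ℝ≥0∞) ^ m * ENNReal.ofReal (g v)) ^
            ((k + d) / (m + d)) := by
  have : Nontrivial (EuclideanSpace ℝ (Fin d)) :=
    Module.nontrivial_of_finrank_pos (R := ℝ) (by rwa [finrank_euclideanSpace_fin])
  set B := volume (ball (0 : EuclideanSpace ℝ (Fin d)) 1)
  have hB : B ≠ ⊤ := measure_ball_lt_top.ne
  refine ⟨B.toReal + 1, by positivity, fun g hg G hG hgG ↦ ?_⟩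
  have key := lintegral_enorm_rpow_mul_le volume hg.ennreal_ofReal.aemeasurable
    (G := G.toNNReal) (by simpa using hG) (hgG.mono fun v hv ↦ ofReal_le_ofReal hv.2) hk hkm
  simp only [enorm_eq_nnnorm, finrank_euclideanSpace_fin] at key
  refine key.trans_eq (congrArg (· * _) ?_)
  rw [ofReal_mul (by positivity), ofReal_add toReal_nonneg zero_le_one, ofReal_toReal hB,
    ofReal_one, ← ofReal_rpow_of_pos hG]
  rfl
end

section
/- Let d ≥ 1 be a natural number and let ℝ^d denote EuclideanSpace ℝ (Fin d) with Lebesgue measure. There exists a constant C > 0, depending only on d, such that for every measure space (X, μ), every measurable g : X × ℝ^d → ℝ, and all constants C₀ > 0, C₁ ≥ 0 with 0 ≤ g(x, v) ≤ C₀ for almost every (x, v) and ∫_X ∫_{ℝ^d} ‖v‖² g(x, v) dv dμ(x) ≤ C₁, the mass density ρ_g(x) := ∫_{ℝ^d} g(x, v) dv satisfies ‖ρ_g‖_{L^{(d+2)/d}(X, μ)} ≤ C · C₀^{2/(d+2)} · C₁^{d/(d+2)}. -/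
/-!
Split the velocity integral at a radius `R`. Inside the ball `g ≤ C₀` contributes at most
`C₀ |B_R| = C₀ |B_1| R^d`; outside, `‖v‖² ≥ R²` bounds it by `R⁻²` times the kinetic energy
density `e(x)`. Optimizing in `R` gives `ρ(x) ≤ 2 (C₀ |B_1|)^{2/(d+2)} e(x)^{d/(d+2)}`, and raising
this to the power `(d+2)/d` bounds `ρ^{(d+2)/d}` by a multiple of `e`, whose integral is at most
`C₁`.
-/

open MeasureTheory ENNReal Filter Topology
open scoped NNReal

namespace ENNReal

theorem rpow_mul_rpow_inv_self {x : ℝ≥0∞} (hx0 : x ≠ 0) (hx : x ≠ ⊤) (y : ℝ) :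
    x ^ y * (x ^ y)⁻¹ = 1 :=
  ENNReal.mul_inv_cancel (rpow_pos (pos_iff_ne_zero.2 hx0) hx).ne' (rpow_ne_top_of_ne_zero hx0 hx)

theorem le_two_mul_rpow_mul_rpow_of_forall_le {a m : ℝ} (ha : 0 < a) (hm : 0 < m)
    {A B F : ℝ≥0∞} (hA0 : A ≠ 0) (hA : A ≠ ⊤)
    (h : ∀ R : ℝ≥0, R ≠ 0 → F ≤ A * (R : ℝ≥0∞) ^ a + (R : ℝ≥0∞) ^ (-m) * B) :
    F ≤ 2 * A ^ (m / (a + m)) * B ^ (a / (a + m)) := by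
  have hp : a + m ≠ 0 := by positivity
  rcases eq_or_ne B ⊤ with rfl | hB
  · have hA' : 2 * A ^ (m / (a + m)) ≠ 0 := by positivity
    simp [top_rpow_of_pos (by positivity : 0 < a / (a + m)), mul_top hA']
  rcases eq_or_ne B 0 with rfl | hB0
  · have hlim : Tendsto (fun R : ℝ≥0 => A * (R : ℝ≥0∞) ^ a) (𝓝[>] 0) (𝓝 0) :=
      ((tendsto_const_mul_rpow_nhds_zero_of_pos hA ha).comp
        (continuous_coe.tendsto' 0 0 coe_zero)).mono_left nhdsWithin_le_nhds
    refine (ge_of_tendsto hlim ?_).trans zero_le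
    filter_upwards [self_mem_nhdsWithin] with R hR
    simpa using h R (ne_of_gt hR)
  -- With `A = s ^ (a + m)` and `B = t ^ (a + m)`, both terms equal `s ^ m * t ^ a` at `R = t / s`.
  set s := A ^ (a + m)⁻¹
  set t := B ^ (a + m)⁻¹
  have hs0 : s ≠ 0 := by positivity
  have hs : s ≠ ⊤ := rpow_ne_top_of_ne_zero hA0 hA
  have ht0 : t ≠ 0 := by positivity
  have ht : t ≠ ⊤ := rpow_ne_top_of_ne_zero hB0 hB
  have hts : t / s ≠ ⊤ := div_ne_top ht hs0
  have hball : s ^ (a + m) * (t / s) ^ a = s ^ m * t ^ a := by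
    rw [div_eq_mul_inv, mul_rpow_of_ne_top ht (inv_ne_top.2 hs0), inv_rpow, rpow_add _ _ hs0 hs]
    calc s ^ a * s ^ m * (t ^ a * (s ^ a)⁻¹) = (s ^ a * (s ^ a)⁻¹) * (s ^ m * t ^ a) := by ring
      _ = s ^ m * t ^ a := by rw [rpow_mul_rpow_inv_self hs0 hs, one_mul]
  have htail : (t / s) ^ (-m) * t ^ (a + m) = s ^ m * t ^ a := by
    rw [div_eq_mul_inv, mul_rpow_of_ne_top ht (inv_ne_top.2 hs0), inv_rpow, rpow_neg, rpow_neg,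
      inv_inv, rpow_add _ _ ht0 ht]
    calc (t ^ m)⁻¹ * s ^ m * (t ^ a * t ^ m) = (t ^ m * (t ^ m)⁻¹) * (s ^ m * t ^ a) := by ring
      _ = s ^ m * t ^ a := by rw [rpow_mul_rpow_inv_self ht0 ht, one_mul]
  have hF := h (t / s).toNNReal (toNNReal_pos (ENNReal.div_pos ht0 hs).ne' hts).ne'
  rw [coe_toNNReal hts, ← rpow_inv_rpow hp A, ← rpow_inv_rpow hp B, hball, htail, ← two_mul]
    at hF
  rwa [div_eq_inv_mul, div_eq_inv_mul, rpow_mul, rpow_mul, mul_assoc]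

end ENNReal

theorem lintegral_le_mul_measure_ball_add_rpow_neg_mul {E : Type*} [NormedAddCommGroup E]
    [MeasurableSpace E] [OpensMeasurableSpace E] (ν : Measure E) {f : E → ℝ≥0∞} {M : ℝ≥0∞}
    (hf : ∀ᵐ v ∂ν, f v ≤ M) {m : ℝ} (hm : 0 ≤ m) {R : ℝ≥0} (hR : R ≠ 0) :
    ∫⁻ v, f v ∂ν ≤ M * ν (Metric.ball 0 R) + (R : ℝ≥0∞) ^ (-m) * ∫⁻ v, ‖v‖ₑ ^ m * f v ∂ν := by
  rw [← lintegral_add_compl f (Metric.isOpen_ball (x := 0) (ε := R)).measurableSet]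
  gcongr
  · calc ∫⁻ v in Metric.ball 0 R, f v ∂ν ≤ ∫⁻ _ in Metric.ball 0 R, M ∂ν :=
          lintegral_mono_ae (ae_restrict_of_ae hf)
      _ = M * ν (Metric.ball 0 R) := setLIntegral_const _ _
  · have hRm : (R : ℝ≥0∞) ^ (-m) ≠ ⊤ := rpow_ne_top_of_ne_zero (coe_ne_zero.2 hR) coe_ne_top
    calc ∫⁻ v in (Metric.ball 0 R)ᶜ, f v ∂ν
        ≤ ∫⁻ v in (Metric.ball 0 R)ᶜ, (R : ℝ≥0∞) ^ (-m) * (‖v‖ₑ ^ m * f v) ∂ν := by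
          refine setLIntegral_mono' Metric.isOpen_ball.measurableSet.compl fun v hv => ?_
          have hRv : (R : ℝ≥0∞) ≤ ‖v‖ₑ := by
            rw [enorm_eq_nnnorm, coe_le_coe, ← NNReal.coe_le_coe, coe_nnnorm]
            simpa using hv
          calc f v = ((R : ℝ≥0∞) ^ (-m) * (R : ℝ≥0∞) ^ m) * f v := by
                rw [rpow_neg, ENNReal.inv_mul_cancel (by positivity)
                  (rpow_ne_top_of_nonneg hm coe_ne_top), one_mul]
            _ ≤ (R : ℝ≥0∞) ^ (-m) * (‖v‖ₑ ^ m * f v) := by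
                rw [mul_assoc]; gcongr
      _ ≤ ∫⁻ v, (R : ℝ≥0∞) ^ (-m) * (‖v‖ₑ ^ m * f v) ∂ν := setLIntegral_le_lintegral _ _
      _ = (R : ℝ≥0∞) ^ (-m) * ∫⁻ v, ‖v‖ₑ ^ m * f v ∂ν := lintegral_const_mul' _ _ hRm

theorem lintegral_le_two_mul_rpow_mul_lintegral_enorm_rpow_mul_rpow {E : Type*}
    [NormedAddCommGroup E] [NormedSpace ℝ E] [FiniteDimensional ℝ E] [Nontrivial E]
    [MeasurableSpace E] [BorelSpace E] (ν : Measure E) [ν.IsAddHaarMeasure] {f : E → ℝ≥0∞}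
    {M : ℝ≥0∞} (hM : M ≠ ⊤) (hf : ∀ᵐ v ∂ν, f v ≤ M) {m : ℝ} (hm : 0 < m) :
    ∫⁻ v, f v ∂ν ≤ 2 * (M * ν (Metric.ball 0 1)) ^ (m / (Module.finrank ℝ E + m)) *
      (∫⁻ v, ‖v‖ₑ ^ m * f v ∂ν) ^ ((Module.finrank ℝ E : ℝ) / (Module.finrank ℝ E + m)) := by
  rcases eq_or_ne M 0 with rfl | hM0
  · simp [lintegral_congr_ae (hf.mono fun v hv => nonpos_iff_eq_zero.1 hv)]
  refine le_two_mul_rpow_mul_rpow_of_forall_le (by exact_mod_cast Module.finrank_pos) hm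
    (mul_ne_zero hM0 (Metric.measure_ball_pos ν 0 one_pos).ne')
    (mul_ne_top hM measure_ball_lt_top.ne) fun R hR => ?_
  refine (lintegral_le_mul_measure_ball_add_rpow_neg_mul ν hf hm.le hR).trans_eq ?_
  rw [Measure.addHaar_ball ν 0 R.coe_nonneg, ← NNReal.coe_pow, ofReal_coe_nnreal, coe_pow,
    ← rpow_natCast]
  ring

theorem lintegral_rpow_inv_rpow_le_mul_lintegral_rpow {α : Type*} [MeasurableSpace α]
    {μ : Measure α} {ρ e : α → ℝ≥0∞} {K : ℝ≥0∞} (hK : K ≠ ⊤) {θ : ℝ} (hθ : 0 < θ)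
    (h : ∀ᵐ x ∂μ, ρ x ≤ K * e x ^ θ) :
    (∫⁻ x, ρ x ^ θ⁻¹ ∂μ) ^ θ ≤ K * (∫⁻ x, e x ∂μ) ^ θ := by
  have hpt : ∀ᵐ x ∂μ, ρ x ^ θ⁻¹ ≤ K ^ θ⁻¹ * e x := h.mono fun x hx =>
    (rpow_le_rpow hx (inv_nonneg.2 hθ.le)).trans_eq
      (by rw [mul_rpow_of_nonneg _ _ (inv_nonneg.2 hθ.le), rpow_rpow_inv hθ.ne'])
  calc (∫⁻ x, ρ x ^ θ⁻¹ ∂μ) ^ θ ≤ (∫⁻ x, K ^ θ⁻¹ * e x ∂μ) ^ θ :=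
        rpow_le_rpow (lintegral_mono_ae hpt) hθ.le
    _ = K * (∫⁻ x, e x ∂μ) ^ θ := by
        rw [lintegral_const_mul' _ _ (rpow_ne_top_of_nonneg (inv_nonneg.2 hθ.le) hK),
          mul_rpow_of_nonneg _ _ hθ.le, rpow_inv_rpow hθ.ne']

/-- A bounded distribution function with finite kinetic energy has mass density in
`L^{(d+2)/d}` (Lemma 5.2): `‖ρ_g‖_{L^{(d+2)/d}(X,μ)} ≤ C · C₀^{2/(d+2)} · C₁^{d/(d+2)}`. -/
theorem density_Lp_from_energy (d : ℕ) (hd : 1 ≤ d) :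
    ∃ C : ℝ, 0 < C ∧
      ∀ (X : Type) [MeasurableSpace X], ∀ μ : Measure X,
      ∀ g : X × EuclideanSpace ℝ (Fin d) → ℝ, Measurable g →
      ∀ C₀ C₁ : ℝ, 0 < C₀ → 0 ≤ C₁ →
      (∀ᵐ p ∂(μ.prod (volume : Measure (EuclideanSpace ℝ (Fin d)))), 0 ≤ g p ∧ g p ≤ C₀) →
      (∫⁻ x, (∫⁻ v : EuclideanSpace ℝ (Fin d),
          (‖v‖₊ : ℝ≥0∞) ^ (2 : ℝ) * ENNReal.ofReal (g (x, v))) ∂μ) ≤ ENNReal.ofReal C₁ →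
      (∫⁻ x, (∫⁻ v : EuclideanSpace ℝ (Fin d),
            ENNReal.ofReal (g (x, v))) ^ (((d : ℝ) + 2) / d) ∂μ) ^ ((d : ℝ) / ((d : ℝ) + 2)) ≤
        ENNReal.ofReal (C * C₀ ^ (2 / ((d : ℝ) + 2)) * C₁ ^ ((d : ℝ) / ((d : ℝ) + 2))) := by
  have : Nonempty (Fin d) := ⟨⟨0, hd⟩⟩
  set V := volume (Metric.ball (0 : EuclideanSpace ℝ (Fin d)) 1)
  have hV : V ≠ ⊤ := measure_ball_lt_top.ne
  have hV0 : 0 < V.toReal := toReal_pos (Metric.measure_ball_pos _ _ one_pos).ne' hV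
  refine ⟨2 * V.toReal ^ (2 / ((d : ℝ) + 2)), by positivity,
    fun X _ μ g _ C₀ C₁ hC₀ hC₁ hg hE => ?_⟩
  set K := 2 * (ENNReal.ofReal C₀ * V) ^ (2 / ((d : ℝ) + 2))
  have hK : K ≠ ⊤ :=
    mul_ne_top ofNat_ne_top (rpow_ne_top_of_nonneg (by positivity) (mul_ne_top ofReal_ne_top hV))
  have hρ : ∀ᵐ x ∂μ, ∫⁻ v : EuclideanSpace ℝ (Fin d), ENNReal.ofReal (g (x, v)) ≤
      K * (∫⁻ v : EuclideanSpace ℝ (Fin d), (‖v‖₊ : ℝ≥0∞) ^ (2 : ℝ) * ENNReal.ofReal (g (x, v)))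
        ^ ((d : ℝ) / ((d : ℝ) + 2)) := by
    filter_upwards [Measure.ae_ae_of_ae_prod hg] with x hx
    simpa only [finrank_euclideanSpace_fin, enorm_eq_nnnorm] using
      lintegral_le_two_mul_rpow_mul_lintegral_enorm_rpow_mul_rpow volume ofReal_ne_top
        (hx.mono fun v hv => ofReal_le_ofReal hv.2) two_pos
  rw [← inv_div (d : ℝ)]
  calc _ ≤ K * ENNReal.ofReal C₁ ^ ((d : ℝ) / ((d : ℝ) + 2)) :=
        (lintegral_rpow_inv_rpow_le_mul_lintegral_rpow hK (by positivity) hρ).trans (by gcongr)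
    _ = _ := by
      rw [ENNReal.ofReal_mul (by positivity), ENNReal.ofReal_mul (by positivity),
        ENNReal.ofReal_mul (by positivity), ← ofReal_rpow_of_nonneg toReal_nonneg (by positivity),
        ← ofReal_rpow_of_nonneg hC₀.le (by positivity),
        ← ofReal_rpow_of_nonneg hC₁ (by positivity), ofReal_toReal hV, ofReal_ofNat]
      simp only [K, mul_rpow_of_nonneg _ _ (by positivity : (0 : ℝ) ≤ 2 / ((d : ℝ) + 2))]
      ring
end

section
/- Let d ≥ 2 be a natural number and let ℝ^d denote EuclideanSpace ℝ (Fin d) with Lebesgue measure. Let χ : ℝ^d → ℝ be continuous, nonnegative, supported in the closed unit ball, with ∫_{ℝ^d} χ(x) dx = 1, and for r > 0 define the scaled mollifier χ_r(x) := r^{−d}·χ(x/r). Let C₀ > 0 and let K : ℝ^d → ℝ^d be measurable with ‖K(x)‖ ≤ C₀·(1 + ‖x‖^{−(d−1)}) for all x ≠ 0. Then there exists a constant C > 0, depending only on d, χ and C₀ (in particular independent of r), such that for all r ∈ (0, 1/2] and all x ≠ 0, ∫_{ℝ^d} χ_r(y)·‖K(x − y)‖ dy ≤ C·(1 + ‖x‖^{−(d−1)}).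 -/
open MeasureTheory ENNReal Metric

lemma myRpowEq (d : ℕ) (hd : 2 ≤ d) (t : ℝ) (ht : 0 ≤ t) :
    t ^ (-((d : ℝ) - 1)) = (t ^ (d - 1))⁻¹ := by
  have hdr : (1 : ℝ) < (d : ℝ) := by exact_mod_cast (by omega : 1 < d)
  rcases eq_or_lt_of_le ht with h | h
  · rw [← h, Real.zero_rpow (by intro hc; nlinarith : -((d:ℝ)-1) ≠ 0),
      zero_pow (by omega : d - 1 ≠ 0)]
    simp
  · rw [Real.rpow_neg ht]
    congr 1
    rw [show ((d : ℝ) - 1) = ((d - 1 : ℕ) : ℝ) by push_cast [Nat.cast_sub (by omega : 1 ≤ d)]; ring,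
      Real.rpow_natCast]

lemma annulusBound (d : ℕ) (hd : 2 ≤ d) (R : ℝ) (hR : 0 < R) :
    (∫⁻ z in closedBall (0 : EuclideanSpace ℝ (Fin d)) R,
        ENNReal.ofReal ((‖z‖ ^ (d - 1))⁻¹)) ≤
      ENNReal.ofReal (2 ^ d * R) * volume (ball (0 : EuclideanSpace ℝ (Fin d)) 1) := by
  haveI : Nonempty (Fin d) := ⟨⟨0, by omega⟩⟩
  set E := EuclideanSpace ℝ (Fin d)
  set q : ℝ := 1 / 2 with hq_def
  have hq : (0 : ℝ) < q := by norm_num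
  have hq1 : q < 1 := by norm_num
  set A : ℕ → Set E := fun n => {z | R * q ^ (n + 1) < ‖z‖ ∧ ‖z‖ ≤ R * q ^ n} with hA_def
  set f : E → ℝ≥0∞ := fun z => ENNReal.ofReal ((‖z‖ ^ (d - 1))⁻¹) with hf_def
  set νB := volume (ball (0 : E) 1) with hνB_def
  have hd1 : d = (d - 1) + 1 := (Nat.succ_pred_eq_of_pos (by omega)).symm
  -- covering
  have hsub : closedBall (0 : E) R ⊆ {(0 : E)} ∪ ⋃ n, A n := by
    intro z hz
    rcases eq_or_ne z 0 with h | h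
    · exact Or.inl h
    · right
      have hz0 : 0 < ‖z‖ := norm_pos_iff.2 h
      have hzR : ‖z‖ ≤ R := mem_closedBall_zero_iff.1 hz
      have hex : ∃ n, R * q ^ (n + 1) < ‖z‖ := by
        obtain ⟨n, hn⟩ := exists_pow_lt_of_lt_one (div_pos hz0 hR) hq1
        refine ⟨n, ?_⟩
        have h1 : R * q ^ n < ‖z‖ := by
          rw [mul_comm, ← lt_div_iff₀ hR]; exact hn
        have h2 : q ^ (n + 1) ≤ q ^ n := pow_le_pow_of_le_one hq.le hq1.le (by omega)
        nlinarith
      set n := Nat.find hex with hn_def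
      have hfind : R * q ^ (n + 1) < ‖z‖ := Nat.find_spec hex
      have hup : ‖z‖ ≤ R * q ^ n := by
        rcases Nat.eq_zero_or_pos n with h0 | h0
        · rw [h0]; simpa using hzR
        · have := Nat.find_min hex (show n - 1 < n by omega)
          push_neg at this
          have : ‖z‖ ≤ R * q ^ (n - 1 + 1) := this
          rwa [Nat.sub_add_cancel h0] at this
      exact Set.mem_iUnion.2 ⟨n, hfind, hup⟩
  -- per-annulus
  have hAsub : ∀ n, A n ⊆ closedBall (0 : E) (R * q ^ n) := fun n z hz =>
    mem_closedBall_zero_iff.2 hz.2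
  have hball : ∀ n, volume (closedBall (0 : E) (R * q ^ n)) =
      ENNReal.ofReal ((R * q ^ n) ^ d) * νB := by
    intro n
    rw [Measure.addHaar_closedBall _ _ (by positivity), finrank_euclideanSpace_fin]
  have hkey : ∀ n : ℕ, ((R * q ^ (n + 1)) ^ (d - 1))⁻¹ * (R * q ^ n) ^ d
      = 2 ^ (d - 1) * R * q ^ n := by
    intro n
    have ha : (0 : ℝ) < R * q ^ (n + 1) := by positivity
    have hb : R * q ^ n = 2 * (R * q ^ (n + 1)) := by
      rw [pow_succ, hq_def]; ring
    have hpow : (R * q ^ (n + 1)) ^ d = (R * q ^ (n + 1)) ^ (d - 1) * (R * q ^ (n + 1)) := by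
      conv_lhs => rw [hd1, pow_succ]
    have h2 : (2 : ℝ) ^ d = 2 ^ (d - 1) * 2 := by conv_lhs => rw [hd1, pow_succ]
    have hane : (R * q ^ (n + 1)) ^ (d - 1) ≠ 0 := by positivity
    rw [hb, mul_pow 2 (R * q ^ (n + 1)) d, hpow, h2]
    field_simp
    ring
  have hAnn : ∀ n : ℕ, (∫⁻ z in A n, f z) ≤
      ENNReal.ofReal (2 ^ (d - 1) * R) * ENNReal.ofReal q ^ n * νB := by
    intro n
    have hAm : MeasurableSet (A n) := measurable_norm measurableSet_Ioc
    calc (∫⁻ z in A n, f z)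
        ≤ ∫⁻ _ in A n, ENNReal.ofReal (((R * q ^ (n + 1)) ^ (d - 1))⁻¹) := by
          refine setLIntegral_mono measurable_const fun z hz => ?_
          refine ENNReal.ofReal_le_ofReal ?_
          have h1 : (0 : ℝ) < R * q ^ (n + 1) := by positivity
          exact inv_anti₀ (pow_pos h1 _) (pow_le_pow_left₀ h1.le hz.1.le _)
      _ = ENNReal.ofReal (((R * q ^ (n + 1)) ^ (d - 1))⁻¹) * volume (A n) :=
          setLIntegral_const _ _
      _ ≤ ENNReal.ofReal (((R * q ^ (n + 1)) ^ (d - 1))⁻¹) *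
            (ENNReal.ofReal ((R * q ^ n) ^ d) * νB) := by
          gcongr
          rw [← hball n]
          exact measure_mono (hAsub n)
      _ = ENNReal.ofReal (2 ^ (d - 1) * R) * ENNReal.ofReal q ^ n * νB := by
          rw [← mul_assoc, ← ENNReal.ofReal_mul (by positivity), hkey n,
            ← ENNReal.ofReal_pow hq.le, ← ENNReal.ofReal_mul (by positivity)]
  -- assemble
  have hq2 : ENNReal.ofReal q = 2⁻¹ := by
    rw [hq_def, one_div, ENNReal.ofReal_inv_of_pos (by norm_num)]
    norm_num
  calc (∫⁻ z in closedBall (0 : E) R, f z)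
      ≤ ∫⁻ z in {(0 : E)} ∪ ⋃ n, A n, f z := lintegral_mono_set hsub
    _ ≤ (∫⁻ z in {(0 : E)}, f z) + ∫⁻ z in ⋃ n, A n, f z := lintegral_union_le _ _ _
    _ = ∫⁻ z in ⋃ n, A n, f z := by
        rw [setLIntegral_measure_zero _ _ (measure_singleton _), zero_add]
    _ ≤ ∑' n, ∫⁻ z in A n, f z := lintegral_iUnion_le _ _
    _ ≤ ∑' n, ENNReal.ofReal (2 ^ (d - 1) * R) * ENNReal.ofReal q ^ n * νB :=
        ENNReal.tsum_le_tsum hAnn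
    _ = ENNReal.ofReal (2 ^ (d - 1) * R) * (1 - ENNReal.ofReal q)⁻¹ * νB := by
        rw [ENNReal.tsum_mul_right, ENNReal.tsum_mul_left, ENNReal.tsum_geometric]
    _ = ENNReal.ofReal (2 ^ d * R) * νB := by
        rw [hq2, ENNReal.one_sub_inv_two, inv_inv]
        congr 1
        rw [show (2 : ℝ≥0∞) = ENNReal.ofReal 2 by norm_num, ← ENNReal.ofReal_mul (by positivity)]
        congr 1
        conv_rhs => rw [hd1, pow_succ]
        ring

set_option maxHeartbeats 1000000 in
/-- Uniform-in-`r` bound on the mollified Coulomb-type kernel (Lemma 6.4):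
`∫ χ_r(y) ‖K(x − y)‖ dy ≤ C (1 + ‖x‖^{−(d−1)})` with `C` independent of `r ∈ (0, 1/2]`. -/
theorem mollified_kernel_bound (d : ℕ) (hd : 2 ≤ d)
    (χ : EuclideanSpace ℝ (Fin d) → ℝ) (hχc : Continuous χ) (hχ0 : ∀ x, 0 ≤ χ x)
    (hχsupp : Function.support χ ⊆ Metric.closedBall 0 1)
    (hχint : ∫ x, χ x = 1)
    (C₀ : ℝ) (hC₀ : 0 < C₀)
    (K : EuclideanSpace ℝ (Fin d) → EuclideanSpace ℝ (Fin d)) (hK : Measurable K)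
    (hKbound : ∀ x : EuclideanSpace ℝ (Fin d), x ≠ 0 →
      ‖K x‖ ≤ C₀ * (1 + ‖x‖ ^ (-((d : ℝ) - 1)))) :
    ∃ C : ℝ, 0 < C ∧ ∀ r : ℝ, 0 < r → r ≤ 1 / 2 →
      ∀ x : EuclideanSpace ℝ (Fin d), x ≠ 0 →
        (∫⁻ y, ENNReal.ofReal ((r ^ d)⁻¹ * χ (r⁻¹ • y) * ‖K (x - y)‖)) ≤
          ENNReal.ofReal (C * (1 + ‖x‖ ^ (-((d : ℝ) - 1)))) := by
  classical
  haveI : Nonempty (Fin d) := ⟨⟨0, by omega⟩⟩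
  have hd1 : d = (d - 1) + 1 := (Nat.succ_pred_eq_of_pos (by omega)).symm
  -- a uniform bound on χ
  have hχcs : HasCompactSupport χ :=
    HasCompactSupport.intro (isCompact_closedBall (0 : EuclideanSpace ℝ (Fin d)) 1)
      (fun y hy => by
        by_contra h
        exact hy (hχsupp (Function.mem_support.2 h)))
  obtain ⟨B, hB⟩ := hχcs.exists_bound_of_continuous hχc
  have hB' : ∀ y, χ y ≤ B := fun y =>
    (le_abs_self _).trans (by simpa [Real.norm_eq_abs] using hB y)
  have hB0 : (0 : ℝ) ≤ B := (hχ0 0).trans (hB' 0)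
  set V : ℝ := (volume (Metric.ball (0 : EuclideanSpace ℝ (Fin d)) 1)).toReal with hV_def
  have hV0 : (0 : ℝ) ≤ V := ENNReal.toReal_nonneg
  have hνB_ne : volume (Metric.ball (0 : EuclideanSpace ℝ (Fin d)) 1) ≠ ⊤ :=
    measure_ball_lt_top.ne
  have hνB_eq : volume (Metric.ball (0 : EuclideanSpace ℝ (Fin d)) 1) = ENNReal.ofReal V :=
    (ENNReal.ofReal_toReal hνB_ne).symm
  refine ⟨(B + 1) * C₀ * (V + 1) * (3 * 4 ^ d), by positivity, ?_⟩
  intro r hr hr2 x hx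
  set C : ℝ := (B + 1) * C₀ * (V + 1) * (3 * 4 ^ d) with hC_def
  have hxpos : (0 : ℝ) < ‖x‖ := norm_pos_iff.2 hx
  set gx : ℝ := (‖x‖ ^ (d - 1))⁻¹ with hgx_def
  have hgx0 : (0 : ℝ) ≤ gx := by positivity
  rw [myRpowEq d hd ‖x‖ (norm_nonneg x)]
  have hsupp_r : ∀ y : EuclideanSpace ℝ (Fin d),
      y ∉ Metric.closedBall (0 : EuclideanSpace ℝ (Fin d)) r → χ (r⁻¹ • y) = 0 := by
    intro y hy
    by_contra h
    apply hy
    have h1 : r⁻¹ • y ∈ Metric.closedBall (0 : EuclideanSpace ℝ (Fin d)) 1 :=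
      hχsupp (Function.mem_support.2 h)
    have h2 : ‖r⁻¹ • y‖ ≤ 1 := mem_closedBall_zero_iff.1 h1
    rw [norm_smul, norm_inv, Real.norm_eq_abs, abs_of_pos hr] at h2
    have h3 : ‖y‖ ≤ r := by
      rw [inv_mul_le_iff₀ hr] at h2
      simpa using h2
    exact mem_closedBall_zero_iff.2 h3
  have hae : ∀ᵐ y : EuclideanSpace ℝ (Fin d), y ≠ x :=
    measure_eq_zero_iff_ae_notMem.mp (measure_singleton x)
  have hrd : (0 : ℝ) < r ^ d := pow_pos hr d
  have h4d1 : (1 : ℝ) ≤ 4 ^ d := by simpa using pow_le_pow_left₀ (by norm_num : (0:ℝ) ≤ 1) (by norm_num : (1:ℝ) ≤ 4) d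
  have h2d4 : (2 : ℝ) ^ (d - 1) ≤ 4 ^ d := by
    calc (2 : ℝ) ^ (d - 1) ≤ 2 ^ d := pow_le_pow_right₀ (by norm_num) (by omega)
      _ ≤ 4 ^ d := pow_le_pow_left₀ (by norm_num) (by norm_num) d
  by_cases hcase : 2 * r ≤ ‖x‖
  · -- far case
    set M : ℝ := C₀ * (1 + 2 ^ (d - 1) * gx) with hM_def
    have hM0 : (0 : ℝ) ≤ M := by positivity
    have hpt : ∀ᵐ y : EuclideanSpace ℝ (Fin d),
        ENNReal.ofReal ((r ^ d)⁻¹ * χ (r⁻¹ • y) * ‖K (x - y)‖) ≤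
        ENNReal.ofReal (M * ((r ^ d)⁻¹ * χ (r⁻¹ • y))) := by
      filter_upwards [hae] with y hy
      apply ENNReal.ofReal_le_ofReal
      by_cases hmem : y ∈ Metric.closedBall (0 : EuclideanSpace ℝ (Fin d)) r
      · have h1 : ‖y‖ ≤ r := mem_closedBall_zero_iff.1 hmem
        have h2 : ‖x‖ / 2 ≤ ‖x - y‖ := by
          have h3 : ‖x‖ - ‖y‖ ≤ ‖x - y‖ := norm_sub_norm_le x y
          linarith
        have hp : (0 : ℝ) < ‖x‖ / 2 := by positivity
        have hxy : x - y ≠ 0 := sub_ne_zero.2 (Ne.symm hy)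
        have hK1 : ‖K (x - y)‖ ≤ C₀ * (1 + (‖x - y‖ ^ (d - 1))⁻¹) := by
          rw [← myRpowEq d hd _ (norm_nonneg _)]
          exact hKbound _ hxy
        have h3 : (‖x - y‖ ^ (d - 1))⁻¹ ≤ 2 ^ (d - 1) * gx := by
          have h4 : (‖x - y‖ ^ (d - 1))⁻¹ ≤ ((‖x‖ / 2) ^ (d - 1))⁻¹ :=
            inv_anti₀ (pow_pos hp _) (pow_le_pow_left₀ hp.le h2 _)
          have h5 : ((‖x‖ / 2) ^ (d - 1))⁻¹ = 2 ^ (d - 1) * gx := by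
            rw [div_pow, inv_div, hgx_def, div_eq_mul_inv]
          linarith
        have hKM : ‖K (x - y)‖ ≤ M := by
          refine hK1.trans ?_
          rw [hM_def]
          have h6 := mul_le_mul_of_nonneg_left
            (by linarith : 1 + (‖x - y‖ ^ (d - 1))⁻¹ ≤ 1 + 2 ^ (d - 1) * gx) hC₀.le
          linarith
        calc (r ^ d)⁻¹ * χ (r⁻¹ • y) * ‖K (x - y)‖
            ≤ (r ^ d)⁻¹ * χ (r⁻¹ • y) * M :=
              mul_le_mul_of_nonneg_left hKM (mul_nonneg (by positivity) (hχ0 _))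
          _ = M * ((r ^ d)⁻¹ * χ (r⁻¹ • y)) := by ring
      · rw [hsupp_r y hmem]
        simp
    have hχr_cont : Continuous (fun y : EuclideanSpace ℝ (Fin d) => (r ^ d)⁻¹ * χ (r⁻¹ • y)) :=
      continuous_const.mul (hχc.comp (continuous_const_smul _))
    have hχr_cs : HasCompactSupport
        (fun y : EuclideanSpace ℝ (Fin d) => (r ^ d)⁻¹ * χ (r⁻¹ • y)) :=
      HasCompactSupport.intro (isCompact_closedBall (0 : EuclideanSpace ℝ (Fin d)) r)
        (fun y hy => by rw [hsupp_r y hy, mul_zero])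
    have hint : Integrable (fun y : EuclideanSpace ℝ (Fin d) => (r ^ d)⁻¹ * χ (r⁻¹ • y)) :=
      hχr_cont.integrable_of_hasCompactSupport hχr_cs
    have hint1 : (∫ y : EuclideanSpace ℝ (Fin d), (r ^ d)⁻¹ * χ (r⁻¹ • y)) = 1 := by
      rw [integral_const_mul, Measure.integral_comp_inv_smul_of_nonneg volume χ hr.le,
        finrank_euclideanSpace_fin, hχint, smul_eq_mul, mul_one, inv_mul_cancel₀ hrd.ne']
    calc (∫⁻ y, ENNReal.ofReal ((r ^ d)⁻¹ * χ (r⁻¹ • y) * ‖K (x - y)‖))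
        ≤ ∫⁻ y, ENNReal.ofReal (M * ((r ^ d)⁻¹ * χ (r⁻¹ • y))) := lintegral_mono_ae hpt
      _ = ∫⁻ y, ENNReal.ofReal M * ENNReal.ofReal ((r ^ d)⁻¹ * χ (r⁻¹ • y)) := by
          simp_rw [ENNReal.ofReal_mul hM0]
      _ = ENNReal.ofReal M * ∫⁻ y, ENNReal.ofReal ((r ^ d)⁻¹ * χ (r⁻¹ • y)) :=
          lintegral_const_mul' _ _ ENNReal.ofReal_ne_top
      _ = ENNReal.ofReal M * ENNReal.ofReal (∫ y, (r ^ d)⁻¹ * χ (r⁻¹ • y)) := by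
          rw [ofReal_integral_eq_lintegral_ofReal hint
            (Filter.Eventually.of_forall fun y => mul_nonneg (by positivity) (hχ0 _))]
      _ = ENNReal.ofReal M := by rw [hint1]; simp
      _ ≤ ENNReal.ofReal (C * (1 + gx)) := by
          apply ENNReal.ofReal_le_ofReal
          have k1 : M ≤ C₀ * (4 ^ d * (1 + gx)) := by
            rw [hM_def]
            refine mul_le_mul_of_nonneg_left ?_ hC₀.le
            nlinarith [mul_le_mul_of_nonneg_right h2d4 hgx0]
          have k2 : C₀ * 4 ^ d ≤ C := by
            have k3 : (1 : ℝ) ≤ (B + 1) * (V + 1) * 3 := by nlinarith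
            calc C₀ * 4 ^ d = C₀ * 4 ^ d * 1 := by ring
              _ ≤ C₀ * 4 ^ d * ((B + 1) * (V + 1) * 3) :=
                  mul_le_mul_of_nonneg_left k3 (by positivity)
              _ = C := by rw [hC_def]; ring
          calc M ≤ C₀ * (4 ^ d * (1 + gx)) := k1
            _ = (C₀ * 4 ^ d) * (1 + gx) := by ring
            _ ≤ C * (1 + gx) := mul_le_mul_of_nonneg_right k2 (by positivity)
  · -- near case
    push_neg at hcase
    set D : ℝ := (r ^ d)⁻¹ * B * C₀ with hD_def
    have hD0 : (0 : ℝ) ≤ D := by positivity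
    have hpt : ∀ᵐ y : EuclideanSpace ℝ (Fin d),
        ENNReal.ofReal ((r ^ d)⁻¹ * χ (r⁻¹ • y) * ‖K (x - y)‖) ≤
        (Metric.closedBall (0 : EuclideanSpace ℝ (Fin d)) r).indicator
          (fun y => ENNReal.ofReal (D * (1 + (‖x - y‖ ^ (d - 1))⁻¹))) y := by
      filter_upwards [hae] with y hy
      by_cases hmem : y ∈ Metric.closedBall (0 : EuclideanSpace ℝ (Fin d)) r
      · rw [Set.indicator_of_mem hmem]
        apply ENNReal.ofReal_le_ofReal
        have hxy : x - y ≠ 0 := sub_ne_zero.2 (Ne.symm hy)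
        have hK1 : ‖K (x - y)‖ ≤ C₀ * (1 + (‖x - y‖ ^ (d - 1))⁻¹) := by
          rw [← myRpowEq d hd _ (norm_nonneg _)]
          exact hKbound _ hxy
        have h1 : (r ^ d)⁻¹ * χ (r⁻¹ • y) ≤ (r ^ d)⁻¹ * B :=
          mul_le_mul_of_nonneg_left (hB' _) (by positivity)
        calc (r ^ d)⁻¹ * χ (r⁻¹ • y) * ‖K (x - y)‖
            ≤ (r ^ d)⁻¹ * B * (C₀ * (1 + (‖x - y‖ ^ (d - 1))⁻¹)) :=
              mul_le_mul h1 hK1 (norm_nonneg _) (by positivity)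
          _ = D * (1 + (‖x - y‖ ^ (d - 1))⁻¹) := by rw [hD_def]; ring
      · rw [Set.indicator_of_notMem hmem, hsupp_r y hmem]
        simp
    have htrans : (∫⁻ y in Metric.closedBall (0 : EuclideanSpace ℝ (Fin d)) r,
          ENNReal.ofReal ((‖x - y‖ ^ (d - 1))⁻¹))
        = ∫⁻ z in Metric.closedBall x r, ENNReal.ofReal ((‖z‖ ^ (d - 1))⁻¹) := by
      have hmp := Measure.measurePreserving_sub_left
        (volume : Measure (EuclideanSpace ℝ (Fin d))) x
      have hemb := (MeasurableEquiv.subLeft x).measurableEmbedding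
      have hpre : (fun y : EuclideanSpace ℝ (Fin d) => x - y) ⁻¹' Metric.closedBall x r
          = Metric.closedBall (0 : EuclideanSpace ℝ (Fin d)) r := by
        ext y
        simp [Metric.mem_closedBall, dist_eq_norm, sub_sub_cancel_left]
      rw [← hpre]
      exact hmp.setLIntegral_comp_preimage_emb hemb
        (fun z => ENNReal.ofReal ((‖z‖ ^ (d - 1))⁻¹)) _
    calc (∫⁻ y, ENNReal.ofReal ((r ^ d)⁻¹ * χ (r⁻¹ • y) * ‖K (x - y)‖))
        ≤ ∫⁻ y, (Metric.closedBall (0 : EuclideanSpace ℝ (Fin d)) r).indicator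
            (fun y => ENNReal.ofReal (D * (1 + (‖x - y‖ ^ (d - 1))⁻¹))) y :=
          lintegral_mono_ae hpt
      _ = ∫⁻ y in Metric.closedBall (0 : EuclideanSpace ℝ (Fin d)) r,
            ENNReal.ofReal (D * (1 + (‖x - y‖ ^ (d - 1))⁻¹)) :=
          lintegral_indicator measurableSet_closedBall _
      _ = ENNReal.ofReal D * ∫⁻ y in Metric.closedBall (0 : EuclideanSpace ℝ (Fin d)) r,
            ENNReal.ofReal (1 + (‖x - y‖ ^ (d - 1))⁻¹) := by
          simp_rw [ENNReal.ofReal_mul hD0]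
          exact lintegral_const_mul' _ _ ENNReal.ofReal_ne_top
      _ = ENNReal.ofReal D * ∫⁻ y in Metric.closedBall (0 : EuclideanSpace ℝ (Fin d)) r,
            (1 + ENNReal.ofReal ((‖x - y‖ ^ (d - 1))⁻¹)) := by
          congr 1
          refine lintegral_congr fun y => ?_
          rw [ENNReal.ofReal_add (by norm_num) (by positivity), ENNReal.ofReal_one]
      _ = ENNReal.ofReal D *
            (volume (Metric.closedBall (0 : EuclideanSpace ℝ (Fin d)) r) +
            ∫⁻ y in Metric.closedBall (0 : EuclideanSpace ℝ (Fin d)) r,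
              ENNReal.ofReal ((‖x - y‖ ^ (d - 1))⁻¹)) := by
          rw [lintegral_add_left measurable_const, setLIntegral_one]
      _ ≤ ENNReal.ofReal D * (ENNReal.ofReal (r ^ d) * ENNReal.ofReal V +
            ENNReal.ofReal (2 ^ d * (3 * r)) * ENNReal.ofReal V) := by
          refine mul_le_mul_right (add_le_add (le_of_eq ?_) ?_) _
          · rw [Measure.addHaar_closedBall _ _ hr.le, finrank_euclideanSpace_fin, hνB_eq]
          · rw [htrans, ← hνB_eq]
            calc (∫⁻ z in Metric.closedBall x r, ENNReal.ofReal ((‖z‖ ^ (d - 1))⁻¹))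
                ≤ ∫⁻ z in Metric.closedBall (0 : EuclideanSpace ℝ (Fin d)) (3 * r),
                    ENNReal.ofReal ((‖z‖ ^ (d - 1))⁻¹) := by
                  refine lintegral_mono_set fun z hz => ?_
                  have h1 : ‖z - x‖ ≤ r := mem_closedBall_iff_norm.1 hz
                  have h2 : ‖z‖ ≤ ‖z - x‖ + ‖x‖ := by
                    calc ‖z‖ = ‖z - x + x‖ := by rw [sub_add_cancel]
                      _ ≤ ‖z - x‖ + ‖x‖ := norm_add_le _ _
                  exact mem_closedBall_zero_iff.2 (by linarith)
              _ ≤ ENNReal.ofReal (2 ^ d * (3 * r)) *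
                    volume (Metric.ball (0 : EuclideanSpace ℝ (Fin d)) 1) :=
                  annulusBound d hd (3 * r) (by positivity)
      _ = ENNReal.ofReal (D * (r ^ d * V + 2 ^ d * (3 * r) * V)) := by
          rw [← ENNReal.ofReal_mul hrd.le, ← ENNReal.ofReal_mul (by positivity),
            ← ENNReal.ofReal_add (by positivity) (by positivity),
            ← ENNReal.ofReal_mul hD0]
      _ ≤ ENNReal.ofReal (C * (1 + gx)) := by
          apply ENNReal.ofReal_le_ofReal
          have erd : r ^ d = r ^ (d - 1) * r := by conv_lhs => rw [hd1, pow_succ]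
          have e1 : (r ^ d)⁻¹ * r ^ d = 1 := inv_mul_cancel₀ hrd.ne'
          have e2 : (r ^ d)⁻¹ * r = (r ^ (d - 1))⁻¹ := by
            rw [erd, mul_inv, mul_assoc, inv_mul_cancel₀ hr.ne', mul_one]
          have hrp : (0 : ℝ) < r ^ (d - 1) := pow_pos hr _
          have hxp : (0 : ℝ) < ‖x‖ ^ (d - 1) := pow_pos hxpos _
          have e3 : (r ^ (d - 1))⁻¹ ≤ 2 ^ (d - 1) * gx := by
            have h1 : ‖x‖ ^ (d - 1) ≤ 2 ^ (d - 1) * r ^ (d - 1) := by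
              calc ‖x‖ ^ (d - 1) ≤ (2 * r) ^ (d - 1) :=
                    pow_le_pow_left₀ (norm_nonneg x) hcase.le _
                _ = 2 ^ (d - 1) * r ^ (d - 1) := mul_pow _ _ _
            have h2 : (r ^ (d - 1))⁻¹ * ‖x‖ ^ (d - 1) ≤ 2 ^ (d - 1) := by
              rw [inv_mul_le_iff₀ hrp]
              linarith
            calc (r ^ (d - 1))⁻¹
                = ((r ^ (d - 1))⁻¹ * ‖x‖ ^ (d - 1)) * (‖x‖ ^ (d - 1))⁻¹ := by
                  field_simp
              _ ≤ 2 ^ (d - 1) * (‖x‖ ^ (d - 1))⁻¹ :=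
                  mul_le_mul_of_nonneg_right h2 (by positivity)
              _ = 2 ^ (d - 1) * gx := by rw [hgx_def]
          have lhs_eq : D * (r ^ d * V + 2 ^ d * (3 * r) * V)
              = B * C₀ * V * ((r ^ d)⁻¹ * r ^ d)
                + (B * C₀ * V * 3 * 2 ^ d) * ((r ^ d)⁻¹ * r) := by
            rw [hD_def]; ring
          rw [lhs_eq, e1, e2, mul_one]
          have t2 : (2 : ℝ) ^ d * 2 ^ (d - 1) ≤ 4 ^ d := by
            rw [← pow_add]
            calc (2 : ℝ) ^ (d + (d - 1)) ≤ 2 ^ (2 * d) :=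
                pow_le_pow_right₀ (by norm_num) (by omega)
              _ = 4 ^ d := by rw [pow_mul]; norm_num
          have t1 : B * C₀ * V * 3 * 2 ^ d * (r ^ (d - 1))⁻¹
              ≤ B * C₀ * V * 3 * (4 ^ d * gx) := by
            calc B * C₀ * V * 3 * 2 ^ d * (r ^ (d - 1))⁻¹
                ≤ B * C₀ * V * 3 * 2 ^ d * (2 ^ (d - 1) * gx) :=
                  mul_le_mul_of_nonneg_left e3 (by positivity)
              _ = (B * C₀ * V * 3) * ((2 ^ d * 2 ^ (d - 1)) * gx) := by ring
              _ ≤ (B * C₀ * V * 3) * (4 ^ d * gx) :=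
                  mul_le_mul_of_nonneg_left
                    (mul_le_mul_of_nonneg_right t2 hgx0) (by positivity)
          have k3 : (1 : ℝ) ≤ 3 * 4 ^ d := by nlinarith
          have u1 : B * V ≤ (B + 1) * (V + 1) := by nlinarith
          have u2 : B * C₀ * V ≤ (B + 1) * C₀ * (V + 1) := by
            calc B * C₀ * V = C₀ * (B * V) := by ring
              _ ≤ C₀ * ((B + 1) * (V + 1)) := mul_le_mul_of_nonneg_left u1 hC₀.le
              _ = (B + 1) * C₀ * (V + 1) := by ring
          have t3 : B * C₀ * V ≤ C := by
            rw [hC_def]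
            calc B * C₀ * V ≤ (B + 1) * C₀ * (V + 1) := u2
              _ = (B + 1) * C₀ * (V + 1) * 1 := by ring
              _ ≤ (B + 1) * C₀ * (V + 1) * (3 * 4 ^ d) :=
                  mul_le_mul_of_nonneg_left k3 (by positivity)
          have t4 : B * C₀ * V * 3 * (4 ^ d * gx) ≤ C * gx := by
            have h5 : B * C₀ * V * 3 * 4 ^ d ≤ C := by
              rw [hC_def]
              calc B * C₀ * V * 3 * 4 ^ d = (B * C₀ * V) * (3 * 4 ^ d) := by ring
                _ ≤ ((B + 1) * C₀ * (V + 1)) * (3 * 4 ^ d) :=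
                    mul_le_mul_of_nonneg_right u2 (by positivity)
            calc B * C₀ * V * 3 * (4 ^ d * gx) = (B * C₀ * V * 3 * 4 ^ d) * gx := by ring
              _ ≤ C * gx := mul_le_mul_of_nonneg_right h5 hgx0
          have expand : C * (1 + gx) = C + C * gx := by ring
          rw [expand]
          linarith
end
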